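/- Let q₁, q₂, q₃ ∈ ℝ. For ϑ = (ϑ₁, ϑ₂, ϑ₃) ∈ ℝ³ write c_j = cos ϑ_j and c₀ = c₁ + c₂ + c₃, and define the Hermitian 4×4 matrix H(ϑ) with diagonal entries 4 + q₁, 4 + q₂, 4 + q₃, 18 − 2c₀, with H(ϑ)₁₄ = −(1 + e^{iϑ₁})(1 + e^{iϑ₂}), H(ϑ)₂₄ = −(1 + e^{iϑ₁})(1 + e^{iϑ₃}), H(ϑ)₃₄ = −(1 + e^{iϑ₂})(1 + e^{iϑ₃}), with H(ϑ)₄₁, H(ϑ)₄₂, H(ϑ)₄₃ their complex conjugates, and all remaining off-diagonal entries 0. Then for λ ∈ ℝ the following are equivalent: (i) λ is an eigenvalue of H(ϑ) for every ϑ ∈ ℝ³; (ii) there exist j ≠ k in {1, 2, 3} with q_j = q_k and λ = q_j + 4. -/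

import Mathlib

open Matrix Complex

/-- The Floquet fiber matrix of the Schrödinger operator on the face-centered cubic
lattice with potential values `q 0, q 1, q 2` on the face-center vertices. -/
noncomputable def fccFiberQ (q : Fin 3 → ℝ) (ϑ : Fin 3 → ℝ) : Matrix (Fin 4) (Fin 4) ℂ :=
  !![((4 + q 0 : ℝ) : ℂ), 0, 0,
       -((1 + Complex.exp (Complex.I * ϑ 0)) * (1 + Complex.exp (Complex.I * ϑ 1)));
     0, ((4 + q 1 : ℝ) : ℂ), 0,
       -((1 + Complex.exp (Complex.I * ϑ 0)) * (1 + Complex.exp (Complex.I * ϑ 2)));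
     0, 0, ((4 + q 2 : ℝ) : ℂ),
       -((1 + Complex.exp (Complex.I * ϑ 1)) * (1 + Complex.exp (Complex.I * ϑ 2)));
     -((1 + Complex.exp (-Complex.I * ϑ 0)) * (1 + Complex.exp (-Complex.I * ϑ 1))),
       -((1 + Complex.exp (-Complex.I * ϑ 0)) * (1 + Complex.exp (-Complex.I * ϑ 2))),
       -((1 + Complex.exp (-Complex.I * ϑ 1)) * (1 + Complex.exp (-Complex.I * ϑ 2))),
       ((18 - 2 * (Real.cos (ϑ 0) + Real.cos (ϑ 1) + Real.cos (ϑ 2))) : ℝ)]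

noncomputable def fccDet (q : Fin 3 → ℝ) (lam : ℝ) (ϑ : Fin 3 → ℝ) : ℝ :=
  (4 + q 0 - lam) * ((4 + q 1 - lam) * (4 + q 2 - lam)) *
      (24 - lam - (2 + 2 * Real.cos (ϑ 0)) - (2 + 2 * Real.cos (ϑ 1)) - (2 + 2 * Real.cos (ϑ 2)))
    - (4 + q 1 - lam) * (4 + q 2 - lam) * ((2 + 2 * Real.cos (ϑ 0)) * (2 + 2 * Real.cos (ϑ 1)))
    - (4 + q 0 - lam) * (4 + q 2 - lam) * ((2 + 2 * Real.cos (ϑ 0)) * (2 + 2 * Real.cos (ϑ 2)))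
    - (4 + q 0 - lam) * (4 + q 1 - lam) * ((2 + 2 * Real.cos (ϑ 1)) * (2 + 2 * Real.cos (ϑ 2)))

lemma hkey (θ : ℝ) :
    (1 + Complex.exp (Complex.I * θ)) * (1 + Complex.exp (-Complex.I * θ))
      = 2 + 2 * Complex.cos (θ : ℂ) := by
  have h1 : Complex.exp (Complex.I * θ) * Complex.exp (-Complex.I * θ) = 1 := by
    rw [← Complex.exp_add]; norm_num
  have h2 : 2 * Complex.cos (θ : ℂ)
      = Complex.exp (Complex.I * θ) + Complex.exp (-Complex.I * θ) := by
    rw [Complex.two_cos]; ring_nf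
  linear_combination h1 - h2

lemma detArrow (a b c d p r s p' r' s' : ℂ) :
    Matrix.det !![a,0,0,p; 0,b,0,r; 0,0,c,s; p',r',s',d]
      = a * (b * c) * d - b * c * (p * p') - a * c * (r * r') - a * b * (s * s') := by
  rw [Matrix.det_succ_row_zero]
  simp [Fin.sum_univ_succ, Matrix.det_fin_three,
    show (Fin.castSucc 2 : Fin 4) = 2 from rfl, show (Fin.succAbove 3 2 : Fin 4) = 2 from rfl]
  ring

lemma fccMatrix_eq (q : Fin 3 → ℝ) (lam : ℝ) (ϑ : Fin 3 → ℝ) :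
    fccFiberQ q ϑ - (lam : ℂ) • (1 : Matrix (Fin 4) (Fin 4) ℂ)
      = !![((4 + q 0 - lam : ℝ) : ℂ), 0, 0,
           -((1 + Complex.exp (Complex.I * ϑ 0)) * (1 + Complex.exp (Complex.I * ϑ 1)));
         0, ((4 + q 1 - lam : ℝ) : ℂ), 0,
           -((1 + Complex.exp (Complex.I * ϑ 0)) * (1 + Complex.exp (Complex.I * ϑ 2)));
         0, 0, ((4 + q 2 - lam : ℝ) : ℂ),
           -((1 + Complex.exp (Complex.I * ϑ 1)) * (1 + Complex.exp (Complex.I * ϑ 2)));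
         -((1 + Complex.exp (-Complex.I * ϑ 0)) * (1 + Complex.exp (-Complex.I * ϑ 1))),
           -((1 + Complex.exp (-Complex.I * ϑ 0)) * (1 + Complex.exp (-Complex.I * ϑ 2))),
           -((1 + Complex.exp (-Complex.I * ϑ 1)) * (1 + Complex.exp (-Complex.I * ϑ 2))),
           ((18 - 2 * (Real.cos (ϑ 0) + Real.cos (ϑ 1) + Real.cos (ϑ 2)) - lam : ℝ) : ℂ)] := by
  ext i j
  fin_cases i <;> fin_cases j <;>
    simp [fccFiberQ, Matrix.one_apply, Matrix.sub_apply]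

lemma fccDet_eq (q : Fin 3 → ℝ) (lam : ℝ) (ϑ : Fin 3 → ℝ) :
    (fccFiberQ q ϑ - (lam : ℂ) • (1 : Matrix (Fin 4) (Fin 4) ℂ)).det
      = ((fccDet q lam ϑ : ℝ) : ℂ) := by
  rw [fccMatrix_eq, detArrow, fccDet]
  push_cast
  linear_combination
    (-( ((4:ℂ) + q 1 - lam) * ((4:ℂ) + q 2 - lam)) * ((1 + Complex.exp (Complex.I * ϑ 1)) * (1 + Complex.exp (-Complex.I * ϑ 1)))
      - (((4:ℂ) + q 0 - lam) * ((4:ℂ) + q 2 - lam)) * ((1 + Complex.exp (Complex.I * ϑ 2)) * (1 + Complex.exp (-Complex.I * ϑ 2)))) * hkey (ϑ 0)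
    + (-(((4:ℂ) + q 1 - lam) * ((4:ℂ) + q 2 - lam)) * (2 + 2 * Complex.cos ((ϑ 0 : ℝ) : ℂ))
      - (((4:ℂ) + q 0 - lam) * ((4:ℂ) + q 1 - lam)) * ((1 + Complex.exp (Complex.I * ϑ 2)) * (1 + Complex.exp (-Complex.I * ϑ 2)))) * hkey (ϑ 1)
    + (-(((4:ℂ) + q 0 - lam) * ((4:ℂ) + q 2 - lam)) * (2 + 2 * Complex.cos ((ϑ 0 : ℝ) : ℂ))
      - (((4:ℂ) + q 0 - lam) * ((4:ℂ) + q 1 - lam)) * (2 + 2 * Complex.cos ((ϑ 1 : ℝ) : ℂ))) * hkey (ϑ 2)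

lemma fccDet_zero (q : Fin 3 → ℝ) (lam : ℝ)
    (h : ∀ ϑ : Fin 3 → ℝ,
      (fccFiberQ q ϑ - (lam : ℂ) • (1 : Matrix (Fin 4) (Fin 4) ℂ)).det = 0)
    (ϑ : Fin 3 → ℝ) : fccDet q lam ϑ = 0 := by
  have := h ϑ
  rw [fccDet_eq] at this
  exact_mod_cast this

/-- a real number `lam` is a flat band of the Schrödinger operator on the
face-centered cubic lattice (i.e. an eigenvalue of `H(ϑ)` for every `ϑ`) if and only if
two of the potential values coincide, `q j = q k` with `j ≠ k`, and `lam = q j + 4`. -/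
theorem fcc_flat_bands (q : Fin 3 → ℝ) (lam : ℝ) :
    (∀ ϑ : Fin 3 → ℝ,
        (fccFiberQ q ϑ - (lam : ℂ) • (1 : Matrix (Fin 4) (Fin 4) ℂ)).det = 0) ↔
      ∃ j k : Fin 3, j ≠ k ∧ q j = q k ∧ lam = q j + 4 := by
  constructor
  · intro h
    have h1 := fccDet_zero q lam h ![Real.pi, Real.pi, Real.pi]
    have h2 := fccDet_zero q lam h ![0, Real.pi, Real.pi]
    have h3 := fccDet_zero q lam h ![0, 0, Real.pi]
    have h4 := fccDet_zero q lam h ![0, Real.pi, 0]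
    have h5 := fccDet_zero q lam h ![Real.pi, 0, 0]
    simp only [fccDet, Matrix.cons_val_zero, Matrix.cons_val_one, Matrix.head_cons,
      Matrix.cons_val_two, Matrix.tail_cons, Real.cos_pi, Real.cos_zero] at h1 h2 h3 h4 h5
    set A := 4 + q 0 - lam with hA
    set B := 4 + q 1 - lam with hB
    set C := 4 + q 2 - lam with hC
    have habc : A * (B * C) = 0 := by linear_combination (h1 - h2) / 4
    have hbc : B * C = 0 := by linear_combination ((16 - lam) / 16) * habc - h3 / 16
    have hac : A * C = 0 := by linear_combination ((16 - lam) / 16) * habc - h4 / 16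
    have hab : A * B = 0 := by linear_combination ((16 - lam) / 16) * habc - h5 / 16
    rcases mul_eq_zero.mp hab with ha | hb
    · rcases mul_eq_zero.mp hbc with hb | hc
      · exact ⟨0, 1, by decide, by linarith, by linarith⟩
      · exact ⟨0, 2, by decide, by linarith, by linarith⟩
    · rcases mul_eq_zero.mp hac with ha | hc
      · exact ⟨0, 1, by decide, by linarith, by linarith⟩
      · exact ⟨1, 2, by decide, by linarith, by linarith⟩
  · rintro ⟨j, k, hjk, hq, hlam⟩ ϑ
    rw [fccDet_eq]
    norm_cast
    rw [fccDet]
    fin_cases j <;> fin_cases k <;> simp_all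
    all_goals ring
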